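/- Let α, β be real numbers with α > β > −1/2 and ρ = α + β + 1. There exists a constant C > 0 such that for every λ ∈ ℂ with Im λ ≥ 0, one has |c(−λ)^{−1}| ≤ C (1 + |λ|)^{α + 1/2}, where c(−λ)^{−1} = 2^{−ρ−iλ} Γ((ρ−iλ)/2) Γ((ρ−iλ)/2 − β) / (Γ(−iλ) Γ(α+1)). -/

import Mathlib

/-!
Write `λ = 2is`, so that `Im λ ≥ 0` means `Re s ≥ 0`. Legendre's duplication formula for
`Γ(-iλ) = Γ(2s)` turns `c(-λ)⁻¹` into a constant times
`Γ(s + ρ/2) / Γ(s) · Γ(s + 1/2 + (α - β)/2) / Γ(s + 1/2)`, and the two shifts add up to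
`α + 1/2`. It therefore suffices that `‖Γ(s + a) / Γ(s)‖ ≤ C (1 + ‖s‖)^a` on `Re s ≥ 0` for
every `a > 0`; the functional equation reduces this to `0 < a ≤ 1`.

For `0 < a ≤ 1` compare Gauss's products `Γ(s) = lim n^s n! / (s (s+1) ⋯ (s+n))` factor by
factor: `‖s + a + j‖² ≥ (1 + w_j) ‖s + j‖²` with `w_j = 2aj / (j + ‖s‖)²`. Since
`log (1 + w) ≥ w - w²`, the sum of the `w_j` grows like `2a log ((n + 1 + ‖s‖) / (1 + ‖s‖))` and
the sum of the `w_j²` stays bounded, the product of the `1 + w_j` is at least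
`e⁻¹⁰ (n / (1 + ‖s‖))^(2a)`. Hence `‖Γₙ(s + a)‖ ≤ e⁵ (1 + ‖s‖)^a ‖Γₙ(s)‖` for the `n`-th Gauss
product `Γₙ`, uniformly in `n`.
-/

open Complex

/-- The reciprocal of the Jacobi `c`-function at `-λ`:
`c(−λ)⁻¹ = 2^{−ρ−iλ} Γ((ρ−iλ)/2) Γ((ρ−iλ)/2 − β) / (Γ(−iλ) Γ(α+1))` with `ρ = α+β+1`. -/
noncomputable def jacobiCInv (α β : ℝ) (z : ℂ) : ℂ :=
  (2 : ℂ) ^ (-((α : ℂ) + β + 1) - Complex.I * z) *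
    Complex.Gamma (((α : ℂ) + β + 1 - Complex.I * z) / 2) *
    Complex.Gamma (((α : ℂ) + β + 1 - Complex.I * z) / 2 - β) /
    (Complex.Gamma (-(Complex.I * z)) * Complex.Gamma ((α : ℂ) + 1))

open Finset Filter

lemma sub_sq_le_log_one_add {w : ℝ} (hw : 0 ≤ w) : w - w ^ 2 ≤ Real.log (1 + w) := by
  have h := Real.one_sub_inv_le_log_of_pos (show 0 < 1 + w by linarith)
  have : w - w ^ 2 ≤ 1 - (1 + w)⁻¹ := by
    rw [show 1 - (1 + w)⁻¹ = w / (1 + w) by field_simp; ring, le_div_iff₀ (by linarith)]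
    nlinarith [pow_nonneg hw 3]
  linarith

lemma sum_inv_add_one_sq_le_two (n : ℕ) : ∑ i ∈ range n, (((i : ℝ) + 1) ^ 2)⁻¹ ≤ 2 := by
  have h := Finset.sum_Ico_add' (fun i : ℕ ↦ ((i : ℝ) ^ 2)⁻¹) 0 n 1
  rw [zero_add, ← range_eq_Ico] at h
  have h2 := sum_Ioo_inv_sq_le (α := ℝ) 0 (n + 1)
  rw [← Finset.Ico_add_one_left_eq_Ioo, zero_add, ← h] at h2
  push_cast at h2
  linarith

/-- Both differences on the left telescope along `x = i + 1 + r`. -/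
lemma log_add_one_sub_log_sub_le {x r : ℝ} (hx : 1 < x) (hr : 0 ≤ r) :
    Real.log (x + 1) - Real.log x - (r / (x - 1) - r / x) ≤ (x - r) / x ^ 2 := by
  have hx0 : 0 < x := by linarith
  have hx1 : x - 1 ≠ 0 := by linarith
  have hlog : Real.log (x + 1) - Real.log x ≤ 1 / x := by
    have := Real.log_le_sub_one_of_pos (show 0 < (x + 1) / x by positivity)
    rw [Real.log_div (by positivity) hx0.ne'] at this
    rwa [add_div, div_self hx0.ne', add_sub_cancel_left] at this
  have htail : r / x ^ 2 ≤ r / (x - 1) - r / x := by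
    rw [show r / (x - 1) - r / x = r / ((x - 1) * x) by field_simp; ring]
    exact div_le_div_of_nonneg_left hr (by nlinarith) (by nlinarith)
  have hsplit : (x - r) / x ^ 2 = 1 / x - r / x ^ 2 := by field_simp
  linarith

lemma log_sub_log_sub_one_le_sum_div_sq {r : ℝ} (hr : 0 < r) (n : ℕ) :
    Real.log (n + 1 + r) - Real.log (1 + r) - 1 ≤
      ∑ i ∈ range n, ((i : ℝ) + 1) / ((i : ℝ) + 1 + r) ^ 2 := by
  have hlog : ∑ i ∈ range n, (Real.log ((i + 1 : ℕ) + 1 + r) - Real.log ((i : ℕ) + 1 + r)) =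
      Real.log (n + 1 + r) - Real.log (1 + r) := by
    simpa using Finset.sum_range_sub (fun i : ℕ ↦ Real.log ((i : ℝ) + 1 + r)) n
  have htail : ∑ i ∈ range n, (r / ((i : ℕ) + r) - r / ((i + 1 : ℕ) + r)) ≤ 1 := by
    rw [Finset.sum_range_sub' (fun i : ℕ ↦ r / ((i : ℝ) + r)) n]
    have : 0 ≤ r / (n + r) := by positivity
    simp only [CharP.cast_eq_zero, zero_add, div_self hr.ne']
    linarith
  have hterm : ∀ i ∈ range n,
      (Real.log ((i + 1 : ℕ) + 1 + r) - Real.log ((i : ℕ) + 1 + r)) -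
        (r / ((i : ℕ) + r) - r / ((i + 1 : ℕ) + r)) ≤ ((i : ℝ) + 1) / ((i : ℝ) + 1 + r) ^ 2 := by
    intro i _
    have := log_add_one_sub_log_sub_le (x := i + 1 + r)
      (by linarith [(Nat.cast_nonneg i : (0 : ℝ) ≤ i)]) hr.le
    convert this using 3
    all_goals push_cast; ring_nf
  calc Real.log (n + 1 + r) - Real.log (1 + r) - 1
      ≤ ∑ i ∈ range n, (Real.log ((i + 1 : ℕ) + 1 + r) - Real.log ((i : ℕ) + 1 + r)) -
          ∑ i ∈ range n, (r / ((i : ℕ) + r) - r / ((i + 1 : ℕ) + r)) := by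
        rw [hlog]; linarith
    _ ≤ _ := by rw [← sum_sub_distrib]; exact sum_le_sum hterm

lemma div_rpow_le_exp_mul_prod {a r : ℝ} (ha : 0 ≤ a) (ha1 : a ≤ 1) (hr : 0 < r) (n : ℕ) :
    ((n + 1 + r) / (1 + r)) ^ (2 * a) ≤
      Real.exp 10 * ∏ i ∈ range n, (1 + 2 * a * (((i : ℝ) + 1) / ((i : ℝ) + 1 + r) ^ 2)) := by
  set q : ℕ → ℝ := fun i ↦ ((i : ℝ) + 1) / ((i : ℝ) + 1 + r) ^ 2
  have hq0 : ∀ i, 0 ≤ q i := fun i ↦ by positivity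
  have hq_sq : ∑ i ∈ range n, q i ^ 2 ≤ 2 := by
    refine (sum_le_sum fun i _ ↦ ?_).trans (sum_inv_add_one_sq_le_two n)
    rw [← inv_pow]
    refine pow_le_pow_left₀ (hq0 i) ?_ 2
    rw [div_le_iff₀ (by positivity)]
    field_simp
    nlinarith [(Nat.cast_nonneg i : (0 : ℝ) ≤ i)]
  have hlog_sum : 2 * a * (Real.log (n + 1 + r) - Real.log (1 + r)) - 10 ≤
      ∑ i ∈ range n, Real.log (1 + 2 * a * q i) := by
    have h1 := log_sub_log_sub_one_le_sum_div_sq hr n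
    calc 2 * a * (Real.log (n + 1 + r) - Real.log (1 + r)) - 10
        ≤ 2 * a * ∑ i ∈ range n, q i - 4 * a ^ 2 * ∑ i ∈ range n, q i ^ 2 := by
          nlinarith
      _ = ∑ i ∈ range n, (2 * a * q i - (2 * a * q i) ^ 2) := by
          rw [sum_sub_distrib, mul_sum, mul_sum]; simp only [mul_pow]; ring_nf
      _ ≤ _ := sum_le_sum fun i _ ↦ sub_sq_le_log_one_add (by positivity)
  calc ((n + 1 + r) / (1 + r)) ^ (2 * a)
      = Real.exp (2 * a * (Real.log (n + 1 + r) - Real.log (1 + r))) := by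
        rw [Real.rpow_def_of_pos (by positivity), Real.log_div (by positivity) (by positivity),
          mul_comm]
    _ ≤ Real.exp (10 + ∑ i ∈ range n, Real.log (1 + 2 * a * q i)) :=
        Real.exp_le_exp.2 (by linarith)
    _ = _ := by
        rw [Real.exp_add, Real.exp_sum]
        congr 1
        exact prod_congr rfl fun i _ ↦ Real.exp_log (by positivity)

lemma one_add_mul_sq_norm_add_le {s : ℂ} (hs : 0 ≤ s.re) {a p : ℝ} (ha : 0 ≤ a) (hp : 0 ≤ p) :
    (1 + 2 * a * (p / (p + ‖s‖) ^ 2)) * ‖s + p‖ ^ 2 ≤ ‖s + a + p‖ ^ 2 := by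
  have hw : 2 * a * (p / (p + ‖s‖) ^ 2) * ‖s + p‖ ^ 2 ≤ 2 * a * p := by
    rcases (add_nonneg hp (norm_nonneg s)).eq_or_lt with h | h
    · rw [← h, zero_pow two_ne_zero, div_zero, mul_zero, zero_mul]; positivity
    · have : ‖s + p‖ ≤ p + ‖s‖ := by
        simpa [add_comm, abs_of_nonneg hp] using norm_add_le s (p : ℂ)
      rw [mul_div_assoc', div_mul_eq_mul_div, div_le_iff₀ (by positivity)]
      gcongr
  have hexpand : ‖s + a + p‖ ^ 2 = ‖s + p‖ ^ 2 + 2 * a * (s.re + p) + a ^ 2 := by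
    simp only [Complex.sq_norm, normSq_apply, add_re, add_im, ofReal_re, ofReal_im]
    ring
  nlinarith [mul_nonneg ha hs]

lemma rpow_mul_prod_norm_le {s : ℂ} (hs : 0 ≤ s.re) (hs0 : s ≠ 0) {a : ℝ} (ha : 0 ≤ a)
    (ha1 : a ≤ 1) (n : ℕ) :
    (n : ℝ) ^ a * ∏ j ∈ range (n + 1), ‖s + j‖ ≤
      Real.exp 5 * (1 + ‖s‖) ^ a * ∏ j ∈ range (n + 1), ‖s + a + j‖ := by
  set r := ‖s‖
  have hr : 0 < r := norm_pos_iff.2 hs0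
  set W := ∏ i ∈ range n, (1 + 2 * a * (((i : ℝ) + 1) / ((i : ℝ) + 1 + r) ^ 2))
  have hW : W * ∏ j ∈ range (n + 1), ‖s + j‖ ^ 2 ≤ ∏ j ∈ range (n + 1), ‖s + a + j‖ ^ 2 := by
    have hW' : W = ∏ j ∈ range (n + 1), (1 + 2 * a * ((j : ℝ) / ((j : ℝ) + r) ^ 2)) := by
      simp only [prod_range_succ', Nat.cast_zero, zero_div, mul_zero, add_zero, mul_one,
        Nat.cast_succ, W]
    rw [hW', ← prod_mul_distrib]
    refine prod_le_prod (fun j _ ↦ by positivity) fun j _ ↦ ?_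
    exact_mod_cast one_add_mul_sq_norm_add_le hs ha (Nat.cast_nonneg j)
  have hsq : ∀ x : ℝ, 0 ≤ x → (x ^ a) ^ 2 = x ^ (2 * a) := fun x hx ↦ by
    rw [mul_comm, ← Real.rpow_mul_natCast hx]; norm_num
  have hn : ((n : ℝ) ^ a) ^ 2 ≤ (Real.exp 5 * (1 + r) ^ a) ^ 2 * W := by
    calc ((n : ℝ) ^ a) ^ 2 ≤ ((n + 1 + r) ^ a) ^ 2 := by gcongr; linarith
      _ = ((1 + r) ^ a) ^ 2 * ((n + 1 + r) / (1 + r)) ^ (2 * a) := by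
        rw [hsq _ (by positivity), hsq _ (by positivity), ← Real.mul_rpow (by positivity)
          (by positivity), mul_div_cancel₀ _ (by positivity)]
      _ ≤ ((1 + r) ^ a) ^ 2 * (Real.exp 10 * W) := by
        gcongr; exact div_rpow_le_exp_mul_prod ha ha1 hr n
      _ = (Real.exp 5 * (1 + r) ^ a) ^ 2 * W := by
        rw [mul_pow, ← Real.exp_nat_mul]; ring_nf
  refine le_of_pow_le_pow_left₀ two_ne_zero (by positivity) ?_
  rw [mul_pow, mul_pow _ (∏ j ∈ range (n + 1), _), ← prod_pow, ← prod_pow]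
  calc ((n : ℝ) ^ a) ^ 2 * ∏ j ∈ range (n + 1), ‖s + j‖ ^ 2
      ≤ (Real.exp 5 * (1 + r) ^ a) ^ 2 * W * ∏ j ∈ range (n + 1), ‖s + j‖ ^ 2 := by gcongr
    _ ≤ _ := by rw [mul_assoc]; gcongr

lemma norm_GammaSeq_add_le {s : ℂ} (hs : 0 ≤ s.re) (hs_nat : ∀ m : ℕ, s ≠ -m) {a : ℝ}
    (ha : 0 < a) (ha1 : a ≤ 1) {n : ℕ} (hn : n ≠ 0) :
    ‖GammaSeq (s + a) n‖ ≤ Real.exp 5 * (1 + ‖s‖) ^ a * ‖GammaSeq s n‖ := by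
  have hn' : (0 : ℝ) < n := by positivity
  have hP : 0 < ∏ j ∈ range (n + 1), ‖s + j‖ :=
    prod_pos fun j _ ↦ norm_pos_iff.2 fun h ↦ hs_nat j (eq_neg_of_add_eq_zero_left h)
  have hQ : 0 < ∏ j ∈ range (n + 1), ‖s + a + j‖ := prod_pos fun j _ ↦ norm_pos_iff.2 fun h ↦ by
    have := congr_arg re h
    simp only [add_re, ofReal_re, natCast_re, zero_re] at this
    linarith [(Nat.cast_nonneg j : (0 : ℝ) ≤ j)]
  have hcpow : ∀ t : ℂ, ‖(n : ℂ) ^ t‖ = (n : ℝ) ^ t.re := fun t ↦ by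
    simpa using norm_cpow_eq_rpow_re_of_pos hn' t
  simp only [GammaSeq, norm_div, norm_mul, norm_prod, hcpow, add_re, ofReal_re,
    Real.rpow_add hn', norm_natCast]
  rw [← mul_div_assoc, div_le_div_iff₀ hQ hP]
  calc (n : ℝ) ^ s.re * (n : ℝ) ^ a * n.factorial * ∏ j ∈ range (n + 1), ‖s + j‖
      = (n : ℝ) ^ s.re * n.factorial * ((n : ℝ) ^ a * ∏ j ∈ range (n + 1), ‖s + j‖) := by ring
    _ ≤ (n : ℝ) ^ s.re * n.factorial *
        (Real.exp 5 * (1 + ‖s‖) ^ a * ∏ j ∈ range (n + 1), ‖s + a + j‖) :=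
      mul_le_mul_of_nonneg_left
        (rpow_mul_prod_norm_le hs (by simpa using hs_nat 0) ha.le ha1 n) (by positivity)
    _ = _ := by ring

lemma norm_Gamma_add_div_Gamma_le_of_le_one {s : ℂ} (hs : 0 ≤ s.re) {a : ℝ} (ha : 0 < a)
    (ha1 : a ≤ 1) : ‖Gamma (s + a) / Gamma s‖ ≤ Real.exp 5 * (1 + ‖s‖) ^ a := by
  by_cases hΓ : Gamma s = 0
  · rw [hΓ, div_zero, norm_zero]; positivity
  have hs_nat : ∀ m : ℕ, s ≠ -m := fun m h ↦ hΓ ((Gamma_eq_zero_iff s).2 ⟨m, h⟩)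
  rw [norm_div, div_le_iff₀ (norm_pos_iff.2 hΓ)]
  exact le_of_tendsto_of_tendsto ((GammaSeq_tendsto_Gamma _).norm)
    (((GammaSeq_tendsto_Gamma s).norm).const_mul _)
    (eventually_atTop.2 ⟨1, fun n hn ↦ norm_GammaSeq_add_le hs hs_nat ha ha1 (by omega)⟩)

/-- At `s = 0` the quotient is `0`, since Mathlib's `Γ` vanishes at its poles. -/
theorem exists_norm_Gamma_add_div_Gamma_le {a : ℝ} (ha : 0 < a) :
    ∃ C, 0 < C ∧ ∀ s : ℂ, 0 ≤ s.re → ‖Gamma (s + a) / Gamma s‖ ≤ C * (1 + ‖s‖) ^ a := by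
  obtain ⟨n, hn⟩ : ∃ n : ℕ, a ≤ n + 1 := ⟨⌈a⌉₊, by linarith [Nat.le_ceil a]⟩
  induction n generalizing a with
  | zero =>
    exact ⟨_, Real.exp_pos 5, fun s hs ↦
      norm_Gamma_add_div_Gamma_le_of_le_one hs ha (by simpa using hn)⟩
  | succ n ih =>
    rcases le_or_gt a 1 with ha1 | ha1
    · exact ⟨_, Real.exp_pos 5, fun s hs ↦ norm_Gamma_add_div_Gamma_le_of_le_one hs ha ha1⟩
    obtain ⟨C, hC, hbound⟩ := ih (a := a - 1) (by linarith) (by push_cast at hn; linarith)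
    refine ⟨C * a, by positivity, fun s hs ↦ ?_⟩
    have hre : 0 < (s + ↑(a - 1)).re := by simp only [add_re, ofReal_re]; linarith
    have hrec : Gamma (s + a) = (s + ↑(a - 1)) * Gamma (s + ↑(a - 1)) := by
      rw [← Gamma_add_one _ (ne_zero_of_re_pos hre)]; push_cast; ring_nf
    have hnorm : ‖s + ↑(a - 1)‖ ≤ a * (1 + ‖s‖) := by
      calc ‖s + ↑(a - 1)‖ ≤ ‖s‖ + ‖((a - 1 : ℝ) : ℂ)‖ := norm_add_le _ _
        _ = ‖s‖ + (a - 1) := by rw [Complex.norm_real, Real.norm_of_nonneg (by linarith)]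
        _ ≤ a * (1 + ‖s‖) := by nlinarith [norm_nonneg s]
    calc ‖Gamma (s + a) / Gamma s‖
        = ‖s + ↑(a - 1)‖ * ‖Gamma (s + ↑(a - 1)) / Gamma s‖ := by
          rw [hrec, mul_div_assoc, norm_mul]
      _ ≤ a * (1 + ‖s‖) * (C * (1 + ‖s‖) ^ (a - 1)) := by
          gcongr
          exact hbound s hs
      _ = C * a * (1 + ‖s‖) ^ a := by
          rw [Real.rpow_sub_one (by positivity)]
          field_simp

/-- No side condition is needed: at the poles of `Γ(2s)`, where Mathlib sets `Γ = 0`, also `Γ(s)`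
or `Γ(s + 1/2)` is `0`, and both sides vanish because `x / 0 = 0`. -/
theorem jacobiCInv_two_mul_I_mul (α β : ℝ) (s : ℂ) :
    jacobiCInv α β (2 * I * s) = 2 ^ (-(α + β : ℂ)) * √Real.pi / Gamma (α + 1) *
      (Gamma (s + ((α + β + 1) / 2 : ℝ)) / Gamma s) *
      (Gamma (s + 1 / 2 + ((α - β) / 2 : ℝ)) / Gamma (s + 1 / 2)) := by
  have hI : I * (2 * I * s) = -(2 * s) := by ring_nf; rw [I_sq]; ring
  have hΓ : Gamma (2 * s) = Gamma s * Gamma (s + 1 / 2) / (2 ^ (1 - 2 * s) * √Real.pi) := by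
    rw [Gamma_mul_Gamma_add_half, mul_assoc, mul_div_cancel_right₀]
    exact mul_ne_zero (by simp) (by simp [Real.pi_pos.le, Real.pi_ne_zero])
  have hpow : (2 : ℂ) ^ (-((α : ℂ) + β + 1) - I * (2 * I * s)) * 2 ^ (1 - 2 * s) =
      2 ^ (-(α + β : ℂ)) := by
    rw [← cpow_add _ _ two_ne_zero, hI]; ring_nf
  rw [jacobiCInv, ← hpow, hI, neg_neg, hΓ]
  simp only [div_eq_mul_inv, mul_inv, inv_inv]
  push_cast
  ring_nf

theorem jacobiCInv_bound (α β : ℝ) (hβ : -(1/2 : ℝ) < β) (hαβ : β < α) :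
    ∃ C : ℝ, 0 < C ∧ ∀ z : ℂ, 0 ≤ z.im →
      ‖jacobiCInv α β z‖ ≤ C * (1 + ‖z‖) ^ (α + 1/2 : ℝ) := by
  set K := ‖(2 : ℂ) ^ (-(α + β : ℂ)) * √Real.pi / Gamma (α + 1)‖
  have hK : 0 < K := norm_pos_iff.2 <| div_ne_zero
    (mul_ne_zero (by simp) (by simp [Real.pi_pos.le, Real.pi_ne_zero]))
    (Gamma_ne_zero_of_re_pos (by simp only [add_re, ofReal_re, one_re]; linarith))
  have ha₁ : 0 < (α + β + 1) / 2 := by linarith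
  have ha₂ : 0 < (α - β) / 2 := by linarith
  obtain ⟨C₁, hC₁, h₁⟩ := exists_norm_Gamma_add_div_Gamma_le ha₁
  obtain ⟨C₂, hC₂, h₂⟩ := exists_norm_Gamma_add_div_Gamma_le ha₂
  refine ⟨K * C₁ * C₂ * 2 ^ (α + 1/2), by positivity, fun z hz ↦ ?_⟩
  obtain ⟨s, rfl⟩ : ∃ s, z = 2 * I * s := ⟨-(I * z) / 2, by ring_nf; rw [I_sq]; ring⟩
  set X := 1 + ‖2 * I * s‖
  have hs : 0 ≤ s.re := by simpa using hz
  have hdom : ∀ w : ℂ, ‖w‖ ≤ ‖s‖ + 1 / 2 → 1 + ‖w‖ ≤ 2 * X := fun w hw ↦ by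
    simp only [X, norm_mul, norm_I, Complex.norm_ofNat]; linarith [norm_nonneg s]
  have hsum : (2 * X) ^ ((α + β + 1) / 2) * (2 * X) ^ ((α - β) / 2) =
      2 ^ (α + 1/2) * X ^ (α + 1/2) := by
    rw [← Real.rpow_add (by positivity), ← Real.mul_rpow (by norm_num) (by positivity)]
    ring_nf
  rw [jacobiCInv_two_mul_I_mul, norm_mul, norm_mul]
  calc _ ≤ K * (C₁ * (2 * X) ^ ((α + β + 1) / 2)) * (C₂ * (2 * X) ^ ((α - β) / 2)) := by
        gcongr
        · refine (h₁ s hs).trans ?_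
          gcongr
          exact hdom s (by linarith)
        · refine (h₂ _ (by rw [add_re]; norm_num; linarith)).trans ?_
          gcongr
          exact hdom _ ((norm_add_le _ _).trans (by norm_num))
    _ = K * C₁ * C₂ * ((2 * X) ^ ((α + β + 1) / 2) * (2 * X) ^ ((α - β) / 2)) := by ring
    _ = _ := by rw [hsum]; ring
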